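/- arXiv:1607.03056 — 8 statements merged into one kernel-verified Lean document; each statement's English description precedes it below -/
import Mathlib

section
/- Let I ⊆ ℝ be an open interval, let a, b : I → ℝ be differentiable, and let h_{n,m} : I → ℝ be differentiable for all integers n, m ≥ 0, with the convention h_{−1,m} := 0. Assume: (i) a′(Γ) ≠ 0 for every Γ ∈ I; (ii) h_{0,0}′ ≡ 0 on I; (iii) for all n ≥ 0, m ≥ 1 and Γ ∈ I, m·h_{n,m}(Γ)·a′(Γ) + (1/2)·( (m−1)·h_{n−1,m−1}(Γ) + (m+1)·h_{n−1,m+1}(Γ) )·b′(Γ) = (1/2)·( h_{n−1,m−1}′(Γ) − h_{n−1,m+1}′(Γ) + h_{n−1,0}′(Γ)·δ_{m,1} )·b(Γ), where δ_{m,1} = 1 if m = 1 and 0 otherwise. Then h_{n,m} ≡ 0 on I for all n ≥ 0 and all m ≥ max(1, n). -/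
open Real

/-- if the family `h_{n,m}` satisfies (with the convention `h_{−1,m} = 0`) the
relations coming from the vanishing of the Poisson bracket of
`Σ εⁿ h_{n,m}(Γ) cos(mγ)` with `a(Γ) + ε b(Γ) cos γ`, and `a′ ≠ 0`, `h_{0,0}′ ≡ 0`,
then `h_{n,m} ≡ 0` for all `m ≥ max(1,n)`. -/
theorem stmt_4 (lo hi : ℝ) (a b : ℝ → ℝ) (h : ℕ → ℕ → ℝ → ℝ)
    (I : Set ℝ) (hI : I = Set.Ioo lo hi)
    (ha : ∀ Γ ∈ I, DifferentiableAt ℝ a Γ)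
    (hb : ∀ Γ ∈ I, DifferentiableAt ℝ b Γ)
    (hh : ∀ n m : ℕ, ∀ Γ ∈ I, DifferentiableAt ℝ (h n m) Γ)
    -- (i) `a′(Γ) ≠ 0` on `I`
    (ha' : ∀ Γ ∈ I, deriv a Γ ≠ 0)
    -- (ii) `h_{0,0}′ ≡ 0` on `I`
    (h00 : ∀ Γ ∈ I, deriv (h 0 0) Γ = 0)
    -- (iii), case `n = 0` (where `h_{−1,m} := 0`)
    (hrec0 : ∀ m : ℕ, 1 ≤ m → ∀ Γ ∈ I, (m : ℝ) * h 0 m Γ * deriv a Γ = 0)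
    -- (iii), case `n ≥ 1`
    (hrec : ∀ n m : ℕ, 1 ≤ m → ∀ Γ ∈ I,
      (m : ℝ) * h (n + 1) m Γ * deriv a Γ +
        (1/2) * (((m : ℝ) - 1) * h n (m - 1) Γ + ((m : ℝ) + 1) * h n (m + 1) Γ) * deriv b Γ
      = (1/2) * (deriv (h n (m - 1)) Γ - deriv (h n (m + 1)) Γ +
          (if m = 1 then deriv (h n 0) Γ else 0)) * b Γ) :
    ∀ n m : ℕ, max 1 n ≤ m → ∀ Γ ∈ I, h n m Γ = 0 := by
  subst hI
  have key : ∀ (f : ℝ → ℝ), (∀ Γ ∈ Set.Ioo lo hi, f Γ = 0) →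
      ∀ Γ ∈ Set.Ioo lo hi, deriv f Γ = 0 := by
    intro f hf Γ hΓ
    have hev : f =ᶠ[nhds Γ] fun _ => (0 : ℝ) := by
      filter_upwards [isOpen_Ioo.mem_nhds hΓ] with x hx using hf x hx
    rw [hev.deriv_eq]
    simp
  intro n
  induction n with
  | zero =>
    intro m hm Γ hΓ
    have h1 : 1 ≤ m := le_trans (le_max_left 1 0) hm
    have heq := hrec0 m h1 Γ hΓ
    have hm0 : (m : ℝ) ≠ 0 := by exact_mod_cast Nat.one_le_iff_ne_zero.mp h1
    have ha0 := ha' Γ hΓ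
    rcases mul_eq_zero.mp heq with h' | h'
    · rcases mul_eq_zero.mp h' with h'' | h''
      · exact absurd h'' hm0
      · exact h''
    · exact absurd h' ha0
  | succ n ih =>
    intro m hm Γ hΓ
    have hmn : n + 1 ≤ m := le_trans (le_max_right 1 (n+1)) hm
    have h1 : 1 ≤ m := le_trans (Nat.le_add_left 1 n) hmn
    have heq := hrec n m h1 Γ hΓ
    have hma : max 1 n ≤ m + 1 := by
      simp [Nat.max_le]; omega
    have hp1 : h n (m + 1) Γ = 0 := ih (m+1) hma Γ hΓ
    have hdp1 : deriv (h n (m + 1)) Γ = 0 :=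
      key _ (fun Γ' hΓ' => ih (m+1) hma Γ' hΓ') Γ hΓ
    have ha0 := ha' Γ hΓ
    have hm0 : (m : ℝ) ≠ 0 := by exact_mod_cast Nat.one_le_iff_ne_zero.mp h1
    rcases eq_or_lt_of_le h1 with hm1 | hm2
    · -- m = 1, hence n = 0
      have hn0 : n = 0 := by omega
      subst hn0
      have hm1' : m = 1 := hm1.symm
      subst hm1'
      have hd0 := h00 Γ hΓ
      simp only [if_pos rfl] at heq
      rw [hp1, hdp1, hd0] at heq
      norm_num at heq
      rcases heq with h' | h'
      · exact h'
      · exact absurd h' ha0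
    · -- m ≥ 2
      have hmm : max 1 n ≤ m - 1 := by simp [Nat.max_le]; omega
      have hpm : h n (m - 1) Γ = 0 := ih (m-1) hmm Γ hΓ
      have hdpm : deriv (h n (m - 1)) Γ = 0 :=
        key _ (fun Γ' hΓ' => ih (m-1) hmm Γ' hΓ') Γ hΓ
      have hne1 : m ≠ 1 := by omega
      rw [if_neg hne1, hpm, hdpm, hp1, hdp1] at heq
      norm_num at heq
      rcases heq with h' | h'
      · rcases h' with h'' | h''
        · exact absurd h'' (by omega)
        · exact h''
      · exact absurd h' ha0
end

section
/- Let D ⊆ ℝ² be open, let g, h : D → ℝ be continuously differentiable, and suppose that the Poisson bracket ∂₁g·∂₂h − ∂₂g·∂₁h vanishes identically on D. Let p ∈ D be a point with ∇g(p) ≠ 0 and ∇h(p) ≠ 0. Then there is an open neighborhood U ⊆ D of p such that { q ∈ U : g(q) = g(p) } = { q ∈ U : h(q) = h(p) }; i.e., near p the level curve of g through p and the level curve of h through p coincide. -/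
/-!
Where `∇g ≠ 0`, a vanishing Poisson bracket means that `∇h` is parallel to `∇g`, i.e. `dh` kills
`ker dg`. After possibly swapping the coordinates, the implicit function theorem writes the level
set of `g` near `p` as the graph of a `C¹` curve; its velocity lies in `ker dg ⊆ ker dh`, so `h` is
constant along it. Thus `g q = g p → h q = h p` near `p`, and the converse follows by exchanging the
roles of `g` and `h`, the bracket being antisymmetric.
-/

open Filter Topology

section LevelSets

variable {𝕜 : Type*} [RCLike 𝕜]
  {E : Type*} [NormedAddCommGroup E] [NormedSpace 𝕜 E]
  {E' : Type*} [NormedAddCommGroup E'] [NormedSpace 𝕜 E']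
  {F : Type*} [NormedAddCommGroup F] [NormedSpace 𝕜 F]
  {G : Type*} [NormedAddCommGroup G] [NormedSpace 𝕜 G]

theorem eventually_eq_of_eventually_hasFDerivAt_zero {φ : E → G} {a : E}
    (hφ : ∀ᶠ x in 𝓝 a, HasFDerivAt φ (0 : E →L[𝕜] G) x) : ∀ᶠ x in 𝓝 a, φ x = φ a := by
  -- the mean value inequality behind this uses convexity of balls over `ℝ`
  let _ : NormedSpace ℝ E := .restrictScalars ℝ 𝕜 E
  obtain ⟨r, hr, hball⟩ := Metric.eventually_nhds_iff_ball.mp hφ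
  have hopen := Metric.isOpen_ball.isOpen_inter_preimage_of_fderiv_eq_zero
    (fun y hy => (hball y hy).differentiableAt.differentiableWithinAt)
    (fun y hy => (hball y hy).fderiv) {φ a}
  filter_upwards [hopen.mem_nhds ⟨Metric.mem_ball_self hr, rfl⟩] with x hx using hx.2

theorem hasFDerivAt_comp_eq_zero_of_ker_le {f : E' → F} {h : E' → G} {γ : E → E'}
    {γ' : E →L[𝕜] E'} {x : E} {c : F} (hγ : HasFDerivAt γ γ' x)
    (hf : DifferentiableAt 𝕜 f (γ x)) (hh : DifferentiableAt 𝕜 h (γ x))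
    (hfγ : ∀ᶠ y in 𝓝 x, f (γ y) = c)
    (hker : ∀ w, fderiv 𝕜 f (γ x) w = 0 → fderiv 𝕜 h (γ x) w = 0) :
    HasFDerivAt (h ∘ γ) (0 : E →L[𝕜] G) x := by
  have hfγ' : (fderiv 𝕜 f (γ x)).comp γ' = 0 :=
    (hf.hasFDerivAt.comp x hγ).unique ((hasFDerivAt_const c x).congr_of_eventuallyEq hfγ)
  convert hh.hasFDerivAt.comp x hγ
  ext w
  exact (hker _ (congrArg (· w) hfγ')).symm

variable [CompleteSpace E] [CompleteSpace E'] [CompleteSpace F]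

theorem eventually_eq_of_eq_of_ker_fderiv_le {f : E × E' → F} {h : E × E' → G} {u : E × E'}
    (hf : ContDiffAt 𝕜 1 f u) (hf₂ : (fderiv 𝕜 f u ∘L .inr 𝕜 E E').IsInvertible)
    (hh : ∀ᶠ v in 𝓝 u, DifferentiableAt 𝕜 h v)
    (hker : ∀ᶠ v in 𝓝 u, ∀ w, fderiv 𝕜 f v w = 0 → fderiv 𝕜 h v w = 0) :
    ∀ᶠ v in 𝓝 u, f v = f u → h v = h u := by
  set ψ := hf.implicitFunction one_ne_zero hf₂
  set γ : E → E × E' := fun x => (x, ψ x)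
  have hψ := hf.contDiffAt_implicitFunction one_ne_zero hf₂
  have hγu : γ u.1 = u := Prod.ext rfl (hf.implicitFunction_apply_self one_ne_zero hf₂)
  have hγ : Tendsto γ (𝓝 u.1) (𝓝 u) :=
    hγu ▸ (continuousAt_id.prodMk hψ.continuousAt).tendsto
  have hhγ : ∀ᶠ x in 𝓝 u.1, h (γ x) = h u := by
    have hderiv : ∀ᶠ x in 𝓝 u.1, HasFDerivAt (h ∘ γ) (0 : E →L[𝕜] G) x := by
      filter_upwards [hψ.eventually (by simp), hγ.eventually (hf.eventually (by simp)),
        hγ.eventually hh, hγ.eventually hker,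
        (hf.eventually_apply_implicitFunction one_ne_zero hf₂).eventually_nhds]
        with x hψx hfx hhx hkerx hfγx
      exact hasFDerivAt_comp_eq_zero_of_ker_le
        ((hasFDerivAt_id x).prodMk (hψx.differentiableAt one_ne_zero).hasFDerivAt)
        (hfx.differentiableAt one_ne_zero) hhx hfγx hkerx
    simpa only [Function.comp, hγu] using eventually_eq_of_eventually_hasFDerivAt_zero hderiv
  filter_upwards [hf.eventually_apply_eq_iff_implicitFunction one_ne_zero hf₂,
    continuousAt_fst.eventually hhγ] with v hψv hhv hfv
  rwa [show γ v.1 = v from Prod.ext rfl (hψv.mp hfv)] at hhv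

end LevelSets

theorem ContinuousLinearMap.isInvertible_of_apply_one_ne_zero {𝕜 : Type*}
    [NontriviallyNormedField 𝕜] {L : 𝕜 →L[𝕜] 𝕜} (hL : L 1 ≠ 0) : L.IsInvertible :=
  ⟨ContinuousLinearEquiv.unitsEquivAut 𝕜 (Units.mk0 _ hL), by ext; simp⟩

theorem ContinuousLinearMap.apply_eq_fst_mul_add_snd_mul (L : ℝ × ℝ →L[ℝ] ℝ) (v : ℝ × ℝ) :
    L v = v.1 * L (1, 0) + v.2 * L (0, 1) := by
  conv_lhs => rw [show v = v.1 • ((1 : ℝ), (0 : ℝ)) + v.2 • ((0 : ℝ), (1 : ℝ)) by ext <;> simp]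
  simp only [map_add, map_smul, smul_eq_mul]

theorem ContinuousLinearMap.apply_eq_zero_of_det_eq_zero {L M : ℝ × ℝ →L[ℝ] ℝ}
    (hLM : L (1, 0) * M (0, 1) - L (0, 1) * M (1, 0) = 0) (hL : L ≠ 0) {v : ℝ × ℝ}
    (hv : L v = 0) : M v = 0 := by
  rw [apply_eq_fst_mul_add_snd_mul] at hv ⊢
  have hL' : L (1, 0) ≠ 0 ∨ L (0, 1) ≠ 0 := by
    by_contra! hL0
    exact hL (ext fun w => by simp [apply_eq_fst_mul_add_snd_mul L w, hL0])
  rcases hL' with h₁ | h₂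
  · exact mul_left_cancel₀ h₁ (by linear_combination M (1, 0) * hv + v.2 * hLM)
  · exact mul_left_cancel₀ h₂ (by linear_combination M (0, 1) * hv - v.1 * hLM)

theorem eventually_eq_of_eq_of_ker_fderiv_le_of_ne_zero {g h : ℝ × ℝ → ℝ} {p : ℝ × ℝ}
    (hg : ContDiffAt ℝ 1 g p) (hgp : fderiv ℝ g p ≠ 0)
    (hh : ∀ᶠ q in 𝓝 p, DifferentiableAt ℝ h q)
    (hker : ∀ᶠ q in 𝓝 p, ∀ w, fderiv ℝ g q w = 0 → fderiv ℝ h q w = 0) :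
    ∀ᶠ q in 𝓝 p, g q = g p → h q = h p := by
  by_cases hg₂ : fderiv ℝ g p (0, 1) = 0
  · set σ := ContinuousLinearEquiv.prodComm ℝ ℝ ℝ with hσ_def
    have hσ : Tendsto σ (𝓝 (σ p)) (𝓝 p) := σ.continuous.tendsto (σ p)
    have hfderivσ (f : ℝ × ℝ → ℝ) (q : ℝ × ℝ) :
        fderiv ℝ (f ∘ σ) q = (fderiv ℝ f (σ q)).comp (σ : ℝ × ℝ →L[ℝ] ℝ × ℝ) :=
      σ.comp_right_fderiv
    have hg₁ : fderiv ℝ g p (1, 0) ≠ 0 := by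
      intro hg₁
      exact hgp (ContinuousLinearMap.ext fun w => by
        simp [ContinuousLinearMap.apply_eq_fst_mul_add_snd_mul _ w, hg₁, hg₂])
    have hswap := eventually_eq_of_eq_of_ker_fderiv_le (hg.comp (σ p) σ.contDiff.contDiffAt)
      (ContinuousLinearMap.isInvertible_of_apply_one_ne_zero (by
        rw [ContinuousLinearMap.comp_apply, hfderivσ]; simpa [hσ_def] using hg₁))
      ((hσ.eventually hh).mono fun q hq => hq.comp q σ.differentiableAt)
      ((hσ.eventually hker).mono fun q hq w hw => by
        simp only [hfderivσ, ContinuousLinearMap.comp_apply,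
          ContinuousLinearEquiv.coe_coe] at hw ⊢
        exact hq _ hw)
    simpa [hσ_def] using (σ.continuous.tendsto p).eventually hswap
  · exact eventually_eq_of_eq_of_ker_fderiv_le hg
      (ContinuousLinearMap.isInvertible_of_apply_one_ne_zero (by simpa using hg₂)) hh hker

noncomputable def poissonBracket (g h : ℝ × ℝ → ℝ) (q : ℝ × ℝ) : ℝ :=
  fderiv ℝ g q (1, 0) * fderiv ℝ h q (0, 1) - fderiv ℝ g q (0, 1) * fderiv ℝ h q (1, 0)

theorem poissonBracket_comm (g h : ℝ × ℝ → ℝ) (q : ℝ × ℝ) :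
    poissonBracket h g q = -poissonBracket g h q := by
  unfold poissonBracket
  ring

theorem eventually_eq_of_eq_of_poissonBracket_eq_zero {g h : ℝ × ℝ → ℝ} {p : ℝ × ℝ}
    (hg : ContDiffAt ℝ 1 g p) (hgp : fderiv ℝ g p ≠ 0)
    (hh : ∀ᶠ q in 𝓝 p, DifferentiableAt ℝ h q)
    (hgh : ∀ᶠ q in 𝓝 p, poissonBracket g h q = 0) :
    ∀ᶠ q in 𝓝 p, g q = g p → h q = h p :=
  eventually_eq_of_eq_of_ker_fderiv_le_of_ne_zero hg hgp hh <| by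
    filter_upwards [hgh, (hg.continuousAt_fderiv one_ne_zero).eventually_ne hgp]
      with q hq hq' w hw
    exact ContinuousLinearMap.apply_eq_zero_of_det_eq_zero hq hq' hw

/-- two `C¹` Poisson-commuting Hamiltonians on an open set `D ⊆ ℝ²` have,
near each point of `D` which is a rest point of neither, the same level curve. -/
theorem stmt_5 (D : Set (ℝ × ℝ)) (hD : IsOpen D) (g h : ℝ × ℝ → ℝ)
    (hg : ContDiffOn ℝ 1 g D) (hh : ContDiffOn ℝ 1 h D)
    (hbracket : ∀ q ∈ D,
      fderiv ℝ g q (1, 0) * fderiv ℝ h q (0, 1)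
        - fderiv ℝ g q (0, 1) * fderiv ℝ h q (1, 0) = 0)
    (p : ℝ × ℝ) (hp : p ∈ D)
    (hgp : fderiv ℝ g p ≠ 0) (hhp : fderiv ℝ h p ≠ 0) :
    ∃ U : Set (ℝ × ℝ), IsOpen U ∧ p ∈ U ∧ U ⊆ D ∧
      {q ∈ U | g q = g p} = {q ∈ U | h q = h p} := by
  have hDp : ∀ᶠ q in 𝓝 p, q ∈ D := hD.eventually_mem hp
  have hdiff {f : ℝ × ℝ → ℝ} (hf : ContDiffOn ℝ 1 f D) : ∀ᶠ q in 𝓝 p, DifferentiableAt ℝ f q :=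
    hDp.mono fun q hq => (hf.contDiffAt (hD.mem_nhds hq)).differentiableAt one_ne_zero
  have hgh : ∀ᶠ q in 𝓝 p, poissonBracket g h q = 0 := hDp.mono hbracket
  have hhg : ∀ᶠ q in 𝓝 p, poissonBracket h g q = 0 :=
    hgh.mono fun q hq => by rw [poissonBracket_comm, hq, neg_zero]
  have hgh_level := eventually_eq_of_eq_of_poissonBracket_eq_zero
    (hg.contDiffAt (hD.mem_nhds hp)) hgp (hdiff hh) hgh
  have hhg_level := eventually_eq_of_eq_of_poissonBracket_eq_zero
    (hh.contDiffAt (hD.mem_nhds hp)) hhp (hdiff hg) hhg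
  obtain ⟨U, hUsub, hUo, hpU⟩ := mem_nhds_iff.mp (hDp.and (hgh_level.and hhg_level))
  refine ⟨U, hUo, hpU, fun q hq => (hUsub hq).1, ?_⟩
  ext q
  exact ⟨fun ⟨hq, hgq⟩ => ⟨hq, (hUsub hq).2.1 hgq⟩, fun ⟨hq, hhq⟩ => ⟨hq, (hUsub hq).2.2 hhq⟩⟩
end

section
/- For every t ∈ [−1, 1] and every n ∈ ℕ: (1/2π)∫₀^{2π} P_n( √(1 − t²)·cos θ ) dθ = δ_n·P_n(t), where δ_n = (−1)^m·(2m−1)!!/(2m)!! if n = 2m is even, and δ_n = 0 if n is odd. -/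
/-!
The averaging `p ↦ (2π)⁻¹ ∫ p(√(1 - t²) cos θ) dθ` is a linear map `cosAverage` on real
polynomials: it sends `X ^ k` to `c_k (1 - X²)^(k/2)`, where `c_k` is the `k`-th moment of `cos`
over a period. The recursion `(k + 2) c_(k+2) = (k + 1) c_k` is exactly what makes `cosAverage`
commute with the Legendre operator `(1 - X²) D² - 2 X D`. Hence `cosAverage P_n` is again a
polynomial eigenfunction of degree `≤ n` with eigenvalue `-n(n+1)`, and such eigenfunctions are
multiples of `P_n`, since an eigenfunction of lower degree `d` would have eigenvalue `-d(d+1)`.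
Comparing coefficients of `X ^ n` identifies the multiple as `(-1)^(n/2) c_n = δ_n`.
-/

open Real Polynomial intervalIntegral
open scoped Nat

/-- The `n`-th Legendre polynomial, via the Rodrigues formula. -/
noncomputable def legendre (n : ℕ) : Polynomial ℝ :=
  Polynomial.C (1 / ((2:ℝ) ^ n * n.factorial)) *
    Polynomial.derivative^[n] ((Polynomial.X ^ 2 - 1) ^ n)

/-- `δ_n = (−1)^m (2m−1)‼/(2m)‼` if `n = 2m` is even, and `0` if `n` is odd. -/
noncomputable def legDelta (n : ℕ) : ℝ :=
  if Even n then (-1 : ℝ) ^ (n / 2) * ((2 * (n / 2) - 1)‼ : ℝ) / ((2 * (n / 2))‼ : ℝ) else 0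

section LegendreOperator

variable {R : Type*} [CommRing R]

noncomputable def legendreOp : R[X] →ₗ[R] R[X] :=
  LinearMap.mulLeft R (1 - X ^ 2) ∘ₗ derivative ∘ₗ derivative -
    LinearMap.mulLeft R (2 * X) ∘ₗ derivative

theorem legendreOp_apply (p : R[X]) :
    legendreOp p = (1 - X ^ 2) * derivative (derivative p) - 2 * X * derivative p := rfl

theorem legendreOp_one : legendreOp (1 : R[X]) = 0 := by
  simp [legendreOp_apply]

theorem legendreOp_X : legendreOp (X : R[X]) = -2 * X := by
  simp [legendreOp_apply]

theorem legendreOp_X_pow_add_two (k : ℕ) :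
    legendreOp (X ^ (k + 2) : R[X]) =
      C ((k + 2) * (k + 1) : R) * X ^ k - C ((k + 2) * (k + 3) : R) * X ^ (k + 2) := by
  simp only [legendreOp_apply, derivative_X_pow_succ, derivative_mul, derivative_natCast,
    derivative_one, map_add, map_mul, map_natCast, map_one, map_ofNat, Nat.cast_add, Nat.cast_one]
  ring

theorem legendreOp_one_sub_X_sq_pow_succ (j : ℕ) :
    legendreOp ((1 - X ^ 2) ^ (j + 1) : R[X]) =
      C (4 * (j + 1) ^ 2 : R) * (1 - X ^ 2) ^ j
        - C (2 * (j + 1) * (2 * j + 3) : R) * (1 - X ^ 2) ^ (j + 1) := by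
  rcases j with _ | j
  · simp only [legendreOp_apply, derivative_pow, derivative_mul, derivative_sub, derivative_one,
      derivative_X, derivative_natCast, map_add, map_mul, map_natCast, map_zero, map_one,
      map_ofNat, map_pow, Nat.cast_add, Nat.cast_one, Nat.add_sub_cancel, Nat.cast_zero, pow_zero]
    ring
  · simp only [legendreOp_apply, derivative_pow, derivative_mul, derivative_sub, derivative_one,
      derivative_X, derivative_natCast, derivative_zero, map_add, map_mul, map_natCast, map_one,
      map_ofNat, map_pow, Nat.cast_add, Nat.cast_one, Nat.add_sub_cancel]
    ring

theorem coeff_legendreOp (p : R[X]) (k : ℕ) :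
    (legendreOp p).coeff k = (k + 1) * (k + 2) * p.coeff (k + 2) - k * (k + 1) * p.coeff k := by
  rw [legendreOp_apply, sub_mul, one_mul, mul_assoc 2, coeff_sub, coeff_sub, coeff_X_pow_mul',
    coeff_ofNat_mul, ← pow_one X, coeff_X_pow_mul']
  rcases k with _ | _ | k
  · rw [if_neg (by omega), if_neg (by omega)]
    simp only [coeff_derivative]
    push_cast
    ring
  · rw [if_neg (by omega), if_pos le_rfl]
    simp only [coeff_derivative]
    push_cast
    ring
  · rw [if_pos (by omega), if_pos (by omega)]
    simp only [coeff_derivative, Nat.add_sub_cancel]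
    push_cast
    ring

theorem eq_zero_of_legendreOp_eq_smul [IsDomain R] [CharZero R] {q : R[X]} {n : ℕ}
    (hq : legendreOp q = -((n : R) * (n + 1)) • q) (hdeg : q.natDegree ≤ n)
    (hn : q.coeff n = 0) : q = 0 := by
  by_contra hq0
  set d := q.natDegree
  have hlead : q.coeff d ≠ 0 := leadingCoeff_ne_zero.mpr hq0
  have hdn : d < n := hdeg.lt_of_ne fun h ↦ hlead (by rwa [h])
  have hcoeff := congrArg (coeff · d) hq
  simp only [coeff_legendreOp, coeff_smul, smul_eq_mul,
    coeff_eq_zero_of_natDegree_lt (show d < d + 2 by omega), mul_zero, zero_sub] at hcoeff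
  have hne : ((n : R) * (n + 1)) - d * (d + 1) ≠ 0 := by
    rw [sub_ne_zero]
    exact_mod_cast (Nat.mul_lt_mul'' hdn (Nat.succ_lt_succ hdn)).ne'
  exact hlead <| (mul_eq_zero.mp (by linear_combination hcoeff)).resolve_left hne

theorem iterate_derivative_X_sq_sub_one_mul_derivative (f : R[X]) (k : ℕ) :
    derivative^[k + 1] ((X ^ 2 - 1) * derivative f) =
      (X ^ 2 - 1) * derivative^[k + 2] f + C (2 * (k + 1) : R) * X * derivative^[k + 1] f
        + C (k * (k + 1) : R) * derivative^[k] f := by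
  induction k with
  | zero =>
    simp only [Function.iterate_succ_apply', Function.iterate_zero_apply, derivative_mul,
      derivative_sub, derivative_X_pow_succ, derivative_one, map_add, map_mul, map_one, map_ofNat,
      map_zero, Nat.cast_zero, Nat.cast_one]
    ring
  | succ k ih =>
    rw [Function.iterate_succ_apply', ih]
    simp only [Function.iterate_succ_apply', derivative_mul, derivative_sub,
      derivative_X_pow_succ, derivative_one, derivative_natCast, derivative_X, derivative_ofNat,
      map_add, map_mul, map_natCast, map_one, map_ofNat, Nat.cast_add, Nat.cast_one]
    ring

theorem legendreOp_iterate_derivative_rodrigues (n : ℕ) :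
    legendreOp (derivative^[n] ((X ^ 2 - 1 : R[X]) ^ n)) =
      -((n : R) * (n + 1)) • derivative^[n] ((X ^ 2 - 1 : R[X]) ^ n) := by
  set w : R[X] := (X ^ 2 - 1) ^ n
  -- differentiating `(X² - 1) w' = 2n X w` `n + 1` times gives the Legendre equation for `w⁽ⁿ⁾`
  have hw : (X ^ 2 - 1) * derivative w = C (2 * n : R) * (X * w) := by
    rcases n with _ | n
    · simp [w]
    · simp only [w, derivative_pow, derivative_sub, derivative_X, derivative_one, map_mul,
        map_ofNat, map_natCast, Nat.cast_add, Nat.cast_one, Nat.add_sub_cancel]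
      ring
  have h := congrArg (derivative^[n + 1]) hw
  rw [iterate_derivative_X_sq_sub_one_mul_derivative, iterate_derivative_C_mul, mul_comm X,
    iterate_derivative_mul_X] at h
  simp only [Function.iterate_succ_apply', add_tsub_cancel_right, nsmul_eq_mul] at h
  rw [legendreOp_apply, smul_eq_C_mul]
  simp only [map_neg, map_mul, map_add, map_natCast, map_one, map_ofNat] at h ⊢
  push_cast at h
  linear_combination -h

end LegendreOperator

noncomputable def cosMoment (k : ℕ) : ℝ :=
  1 / (2 * π) * ∫ θ in (0 : ℝ)..(2 * π), cos θ ^ k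

theorem cosMoment_zero : cosMoment 0 = 1 := by
  simp [cosMoment, field]

theorem cosMoment_add_two (k : ℕ) : (k + 2) * cosMoment (k + 2) = (k + 1) * cosMoment k := by
  simp only [cosMoment, integral_cos_pow, sin_two_pi, sin_zero, mul_zero, sub_zero, zero_div,
    zero_add]
  field_simp

theorem cosMoment_odd (j : ℕ) : cosMoment (2 * j + 1) = 0 := by
  induction j with
  | zero => simp [cosMoment]
  | succ j ih =>
    have h := cosMoment_add_two (2 * j + 1)
    rw [ih, mul_zero, mul_eq_zero] at h
    exact h.resolve_left (by positivity)

theorem cosMoment_two_mul (j : ℕ) : cosMoment (2 * j) = ((2 * j - 1)‼ : ℝ) / (2 * j)‼ := by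
  induction j with
  | zero => simp [cosMoment_zero]
  | succ j ih =>
    have h := cosMoment_add_two (2 * j)
    rw [ih] at h
    rw [show 2 * (j + 1) - 1 = 2 * j + 1 by omega, show 2 * (j + 1) = 2 * j + 2 by ring,
      Nat.doubleFactorial_add_one, Nat.doubleFactorial_add_two]
    have : ((2 * j)‼ : ℝ) ≠ 0 := by positivity
    field_simp at h ⊢
    push_cast at h ⊢
    linear_combination h

theorem legDelta_eq (n : ℕ) : legDelta n = (-1) ^ (n / 2) * cosMoment n := by
  rcases Nat.even_or_odd' n with ⟨j, rfl | rfl⟩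
  · simp [legDelta, cosMoment_two_mul, mul_div_assoc]
  · simp [legDelta, cosMoment_odd]

theorem cosMoment_mul_pow (k : ℕ) (s : ℝ) :
    cosMoment k * s ^ k = cosMoment k * (s ^ 2) ^ (k / 2) := by
  rcases Nat.even_or_odd' k with ⟨j, rfl | rfl⟩
  · rw [← pow_mul, Nat.mul_div_cancel_left j two_pos]
  · simp [cosMoment_odd]

-- The floor in `k / 2` is harmless: `cosMoment k = 0` for odd `k`.
noncomputable def cosAverage : ℝ[X] →ₗ[ℝ] ℝ[X] :=
  lsum fun k ↦ LinearMap.toSpanSingleton ℝ ℝ[X] (C (cosMoment k) * (1 - X ^ 2) ^ (k / 2))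

theorem cosAverage_monomial (k : ℕ) (a : ℝ) :
    cosAverage (monomial k a) = C (a * cosMoment k) * (1 - X ^ 2) ^ (k / 2) := by
  simp [cosAverage, smul_eq_C_mul, mul_assoc]

theorem cosAverage_X_pow (k : ℕ) :
    cosAverage (X ^ k) = C (cosMoment k) * (1 - X ^ 2) ^ (k / 2) := by
  rw [X_pow_eq_monomial, cosAverage_monomial, one_mul]

theorem cosAverage_X_pow_odd (j : ℕ) : cosAverage (X ^ (2 * j + 1)) = 0 := by
  simp [cosAverage_X_pow, cosMoment_odd]

theorem eval_cosAverage {s t : ℝ} (hst : s ^ 2 + t ^ 2 = 1) (p : ℝ[X]) :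
    (cosAverage p).eval t = 1 / (2 * π) * ∫ θ in (0 : ℝ)..(2 * π), p.eval (s * cos θ) := by
  induction p using Polynomial.induction_on' with
  | add p q hp hq =>
    simp only [map_add, eval_add, hp, hq]
    rw [integral_add, mul_add] <;> exact (by fun_prop : Continuous _).intervalIntegrable _ _
  | monomial k a =>
    simp only [cosAverage_monomial, eval_mul, eval_C, eval_pow, eval_sub, eval_one, eval_X,
      eval_monomial, mul_pow, ← mul_assoc, integral_const_mul]
    rw [show 1 - t ^ 2 = s ^ 2 by linarith, mul_assoc a, ← cosMoment_mul_pow, cosMoment]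
    ring

theorem cosAverage_eq_sum {p : ℝ[X]} {n : ℕ} (hp : p.natDegree < n) :
    cosAverage p = ∑ k ∈ Finset.range n, p.coeff k • cosAverage (X ^ k) := by
  conv_lhs => rw [p.as_sum_range_C_mul_X_pow' hp]
  simp only [map_sum, ← smul_eq_C_mul, map_smul]

theorem natDegree_cosAverage_X_pow_le (k : ℕ) : (cosAverage (X ^ k)).natDegree ≤ k := by
  rw [cosAverage_X_pow]
  refine (natDegree_C_mul_le _ _).trans <| (natDegree_pow_le_of_le _ ?_).trans <|
    (mul_comm _ _).trans_le (Nat.mul_div_le k 2)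
  compute_degree

theorem coeff_cosAverage_X_pow_self (k : ℕ) :
    (cosAverage (X ^ k)).coeff k = (-1) ^ (k / 2) * cosMoment k := by
  rcases Nat.even_or_odd' k with ⟨j, rfl | rfl⟩
  · have h := coeff_pow_of_natDegree_le (p := (1 - X ^ 2 : ℝ[X])) (m := j) (n := 2)
      (by compute_degree)
    rw [cosAverage_X_pow, coeff_C_mul, Nat.mul_div_cancel_left j two_pos, mul_comm 2 j, h]
    simp [mul_comm, coeff_one]
  · simp [cosAverage_X_pow, cosMoment_odd]

theorem natDegree_cosAverage_le (p : ℝ[X]) : (cosAverage p).natDegree ≤ p.natDegree := by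
  rw [cosAverage_eq_sum (Nat.lt_succ_self _)]
  refine natDegree_sum_le_of_forall_le _ _ fun k hk ↦ ?_
  exact (natDegree_smul_le _ _).trans <|
    (natDegree_cosAverage_X_pow_le k).trans (Nat.lt_succ_iff.mp (Finset.mem_range.mp hk))

theorem coeff_cosAverage_of_natDegree_le {p : ℝ[X]} {n : ℕ} (hp : p.natDegree ≤ n) :
    (cosAverage p).coeff n = (-1) ^ (n / 2) * cosMoment n * p.coeff n := by
  rw [cosAverage_eq_sum (Nat.lt_succ_of_le hp), finsetSum_coeff,
    Finset.sum_eq_single_of_mem n (Finset.self_mem_range_succ n) fun k hk hkn ↦ ?_]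
  · rw [coeff_smul, coeff_cosAverage_X_pow_self, smul_eq_mul, mul_comm]
  · have hk : k < n := (Nat.lt_succ_iff.mp (Finset.mem_range.mp hk)).lt_of_ne hkn
    rw [coeff_smul, coeff_eq_zero_of_natDegree_lt ((natDegree_cosAverage_X_pow_le k).trans_lt hk),
      smul_zero]

theorem legendreOp_cosAverage (p : ℝ[X]) :
    legendreOp (cosAverage p) = cosAverage (legendreOp p) := by
  suffices h : legendreOp ∘ₗ cosAverage = cosAverage ∘ₗ legendreOp from
    LinearMap.congr_fun h p
  refine lhom_ext' fun k ↦ LinearMap.ext_ring ?_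
  simp only [LinearMap.comp_apply, monomial_one_right_eq_X_pow]
  rcases Nat.even_or_odd' k with ⟨j, rfl | rfl⟩
  · rcases j with _ | j
    · rw [cosAverage_X_pow, ← smul_eq_C_mul, map_smul]
      simp [legendreOp_one]
    · rw [show 2 * (j + 1) = 2 * j + 2 by ring, legendreOp_X_pow_add_two]
      simp only [map_sub, ← smul_eq_C_mul, map_smul, cosAverage_X_pow,
        Nat.add_div_right _ two_pos, Nat.mul_div_cancel_left j two_pos,
        legendreOp_one_sub_X_sq_pow_succ]
      have h := cosMoment_add_two (2 * j)
      push_cast at h ⊢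
      -- only the coefficients of `(1 - X²)^j` differ, by `(2j + 2)` times the recursion
      linear_combination (norm := module) ((2 * j + 2 : ℝ) * h) • ((1 : ℝ[X]) - X ^ 2) ^ j
  · rw [cosAverage_X_pow_odd, map_zero]
    rcases j with _ | j
    · rw [mul_zero, zero_add, pow_one, legendreOp_X, ← C_ofNat, ← C_neg, ← smul_eq_C_mul,
        map_smul, ← pow_one X, cosAverage_X_pow_odd 0, smul_zero]
    · rw [show 2 * (j + 1) + 1 = (2 * j + 1) + 2 by ring, legendreOp_X_pow_add_two, map_sub,
        ← smul_eq_C_mul, ← smul_eq_C_mul, map_smul, map_smul, cosAverage_X_pow_odd,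
        show 2 * j + 1 + 2 = 2 * (j + 1) + 1 by ring, cosAverage_X_pow_odd]
      simp

theorem legendreOp_legendre (n : ℕ) :
    legendreOp (legendre n) = -((n : ℝ) * (n + 1)) • legendre n := by
  rw [legendre, ← smul_eq_C_mul, map_smul, legendreOp_iterate_derivative_rodrigues, smul_comm]

theorem natDegree_legendre_le (n : ℕ) : (legendre n).natDegree ≤ n := by
  refine (natDegree_C_mul_le _ _).trans <| (natDegree_iterate_derivative _ _).trans ?_
  have : ((X ^ 2 - 1 : ℝ[X]) ^ n).natDegree ≤ 2 * n :=
    (natDegree_pow_le_of_le n (by compute_degree)).trans_eq (mul_comm _ _)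
  omega

theorem cosAverage_legendre (n : ℕ) : cosAverage (legendre n) = legDelta n • legendre n := by
  refine sub_eq_zero.mp <| eq_zero_of_legendreOp_eq_smul (n := n) ?_ ?_ ?_
  · rw [map_sub, map_smul, legendreOp_cosAverage, legendreOp_legendre, map_smul,
      smul_sub, smul_comm]
  · exact (natDegree_sub_le _ _).trans <| max_le
      ((natDegree_cosAverage_le _).trans (natDegree_legendre_le n))
      ((natDegree_smul_le _ _).trans (natDegree_legendre_le n))
  · rw [coeff_sub, coeff_cosAverage_of_natDegree_le (natDegree_legendre_le n), coeff_smul,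
      legDelta_eq, smul_eq_mul, sub_self]

/-- `(1/2π)∫₀^{2π} P_n(√(1−t²) cos θ) dθ = δ_n P_n(t)` for `t ∈ [−1,1]`. -/
theorem stmt_6 :
    ∀ t ∈ Set.Icc (-1 : ℝ) 1, ∀ n : ℕ,
      (1 / (2 * π)) * ∫ θ in (0:ℝ)..(2 * π),
          (legendre n).eval (Real.sqrt (1 - t ^ 2) * Real.cos θ)
        = legDelta n * (legendre n).eval t := by
  intro t ht n
  have hst : √(1 - t ^ 2) ^ 2 + t ^ 2 = 1 := by
    rw [sq_sqrt (by nlinarith [ht.1, ht.2])]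
    ring
  rw [← eval_cosAverage hst, cosAverage_legendre, eval_smul, smul_eq_mul]
end

section
/- For all n, k ∈ ℕ with k ≤ n: if n − k is even then the k-th derivative of P_n at 0 equals P_n^{(k)}(0) = (−1)^{(n−k)/2}·(n+k−1)!!/(n−k)!!, while if n − k is odd then P_n^{(k)}(0) = 0. -/
/-!
Rodrigues' formula gives `P_n^{(k)}(0) = (n + k)! / (2ⁿ n!) · [t^{n+k}] (t² - 1)ⁿ`, and
`(t² - 1)ⁿ` only has even-degree coefficients `[t^{2a}] = (-1)^{n-a} (n choose a)`. With
`n + k = 2a`, `n - k = 2b`, the identities `(2a)! = 2^a a! (2a - 1)‼` and `(2b)‼ = 2^b b!`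
turn the resulting quotient of factorials into `(2a - 1)‼ / (2b)‼`.
-/

open Polynomial
open scoped Nat

namespace Nat

theorem factorial_two_mul_eq (a : ℕ) : (2 * a)! = 2 ^ a * a ! * (2 * a - 1)‼ := by
  cases a with
  | zero => rfl
  | succ b =>
    rw [show 2 * (b + 1) = 2 * b + 1 + 1 by ring, factorial_eq_mul_doubleFactorial,
      show 2 * b + 1 + 1 = 2 * (b + 1) by ring, doubleFactorial_two_mul,
      show 2 * (b + 1) - 1 = 2 * b + 1 by omega]

theorem factorial_two_mul_mul_add_choose_div (a b : ℕ) :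
    ((2 * a)! : ℝ) / (2 ^ (a + b) * (a + b)!) * (a + b).choose a = (2 * a - 1)‼ / (2 * b)‼ := by
  have hchoose : ((a + b).choose a : ℝ) * b ! * a ! = (a + b)! := by
    exact_mod_cast add_comm a b ▸ add_choose_mul_factorial_mul_factorial b a
  rw [factorial_two_mul_eq, doubleFactorial_two_mul, ← hchoose]
  have : (a ! : ℝ) ≠ 0 := by positivity
  have : (b ! : ℝ) ≠ 0 := by positivity
  have : ((a + b).choose a : ℝ) ≠ 0 := by exact_mod_cast (choose_pos (le_add_right a b)).ne'
  push_cast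
  field_simp
  rw [pow_add]

end Nat

namespace Polynomial

variable {R : Type*} [CommRing R]

theorem coeff_X_sq_sub_one_pow (n m : ℕ) :
    ((X ^ 2 - 1 : R[X]) ^ n).coeff m =
      if 2 ∣ m then (-1) ^ (n - m / 2) * (n.choose (m / 2) : R) else 0 := by
  have hexpand : (X ^ 2 - 1 : R[X]) ^ n = expand R 2 ((X + C (-1)) ^ n) := by
    simp [sub_eq_add_neg]
  rw [hexpand, coeff_expand two_pos, coeff_X_add_C_pow]

theorem iterate_derivative_eval_zero (p : R[X]) (k : ℕ) :
    (derivative^[k] p).eval 0 = k ! * p.coeff k := by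
  rw [← coeff_zero_eq_eval_zero, coeff_iterate_derivative, zero_add, Nat.descFactorial_self,
    nsmul_eq_mul]

end Polynomial

theorem iterate_derivative_legendre_eval_zero (n k : ℕ) :
    (derivative^[k] (legendre n)).eval 0 =
      (n + k)! / (2 ^ n * n !) * ((X ^ 2 - 1 : ℝ[X]) ^ n).coeff (n + k) := by
  rw [legendre, iterate_derivative_C_mul, eval_mul, eval_C, ← Function.iterate_add_apply,
    iterate_derivative_eval_zero, add_comm k n]
  ring

/-- value of the `k`-th derivative of `P_n` at `0`, for `k ≤ n`. -/
theorem stmt_8 (n k : ℕ) (hk : k ≤ n) :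
    (Even (n - k) →
      (Polynomial.derivative^[k] (legendre n)).eval 0
        = (-1 : ℝ) ^ ((n - k) / 2) * ((n + k - 1)‼ : ℝ) / ((n - k)‼ : ℝ)) ∧
    (¬ Even (n - k) → (Polynomial.derivative^[k] (legendre n)).eval 0 = 0) := by
  rw [iterate_derivative_legendre_eval_zero, coeff_X_sq_sub_one_pow]
  refine ⟨fun ⟨b, hb⟩ => ?_, fun hodd => ?_⟩
  · obtain ⟨a, rfl⟩ : ∃ a, n = a + b := ⟨k + b, by omega⟩
    rw [show a + b + k = 2 * a by omega, show a + b - k = 2 * b by omega,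
      if_pos (dvd_mul_right 2 a), Nat.mul_div_cancel_left _ two_pos,
      Nat.mul_div_cancel_left _ two_pos, Nat.add_sub_cancel_left,
      mul_div_assoc, ← Nat.factorial_two_mul_mul_add_choose_div]
    ring
  · rw [Nat.even_iff] at hodd
    rw [if_neg (by omega), mul_zero]
end

section
/- For m ∈ ℕ let Q_m be the unique polynomial with Q_m(t²) = P_{2m}(t) for all t (it exists because P_{2m} is an even polynomial). Then for every h with 0 ≤ h ≤ m, the h-th derivative of Q_m at 1 equals Q_m^{(h)}(1) = 2^{−h} · ( (2m+2h−1)!! / (2m−1)!! ) · ( (2m)!! / ( (2h)!!·(2m−2h)!! ) ). -/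
/-!
Differentiating `(X² - 1) y' = 2nX y`, `y = (X² - 1)ⁿ`, `n + 1` times gives the Legendre equation
`(X² - 1) P'' + 2X P' = n(n + 1) P`. Substituting `P_{2m} = Q(X²)` turns it into
`4X(X - 1) Q'' + (6X - 2) Q' = 2m(2m + 1) Q`. Differentiating this `h` times and evaluating at
`1`, where the leading coefficient vanishes, gives the first-order recurrence
`2(h + 1) Q^{(h+1)}(1) = (m - h)(2m + 2h + 1) Q^{(h)}(1)`, which together with
`Q(1) = P_{2m}(1) = 1` determines every `Q^{(h)}(1)`; the closed form satisfies the same recurrence.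
-/

open Polynomial
open scoped Nat

theorem Nat.cast_choose_two_mul_two {R : Type*} [CommRing R] (n : ℕ) :
    (n.choose 2 : R) * 2 = n * (n - 1) := by
  induction n with
  | zero => simp
  | succ n ih =>
    rw [Nat.choose_succ_succ', Nat.choose_one_right]
    push_cast
    linear_combination ih

namespace Polynomial

variable {R : Type*}

theorem derivative_X_sq_sub_one [CommRing R] : derivative (X ^ 2 - 1 : R[X]) = 2 * X := by
  rw [derivative_sub, derivative_X_sq, derivative_one, sub_zero, C_ofNat]

/-- The indices `h + j - 1` and `h + j - 2` are truncated only where their coefficient vanishes. -/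
theorem iterate_derivative_mul_iterate_derivative_of_natDegree_le_two [CommSemiring R]
    {p : R[X]} (hp : p.natDegree ≤ 2) (q : R[X]) (h j : ℕ) :
    derivative^[h] (p * derivative^[j] q) =
      p * derivative^[h + j] q + h • (derivative p * derivative^[h + j - 1] q)
        + h.choose 2 • (derivative^[2] p * derivative^[h + j - 2] q) := by
  induction h generalizing p j with
  | zero => simp
  | succ h ih =>
    have hp' : (derivative p).natDegree ≤ 2 := (natDegree_derivative_le p).trans (by omega)
    have hp''' : derivative^[2] (derivative p) = 0 :=
      iterate_derivative_eq_zero ((natDegree_derivative_le p).trans_lt (by omega))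
    rw [Function.iterate_succ_apply, derivative_mul, ← Function.iterate_succ_apply' derivative j,
      iterate_map_add, ih hp', ih hp, hp''']
    simp only [show h + (j + 1) = h + 1 + j by omega, show h + 1 + j - 1 = h + j by omega,
      show h + 1 + j - 2 = h + j - 1 by omega,
      Function.iterate_succ_apply' derivative 1, Function.iterate_one, Nat.choose_succ_succ' h 1,
      Nat.choose_one_right, zero_mul, smul_zero, add_zero, add_smul, one_smul]
    abel

theorem rodrigues_ode [CommRing R] (n : ℕ) :
    (X ^ 2 - 1) * derivative^[n + 2] ((X ^ 2 - 1 : R[X]) ^ n)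
        + 2 * X * derivative^[n + 1] ((X ^ 2 - 1 : R[X]) ^ n)
      = C ((n : R) * (n + 1)) * derivative^[n] ((X ^ 2 - 1 : R[X]) ^ n) := by
  set y := (X ^ 2 - 1 : R[X]) ^ n
  have hy : (X ^ 2 - 1) * derivative^[1] y = (2 * (n : R[X]) * X) * derivative^[0] y := by
    cases n with
    | zero => simp [y]
    | succ n =>
      rw [Function.iterate_one, Function.iterate_zero_apply, derivative_pow_succ,
        derivative_X_sq_sub_one]
      simp only [y, map_add, map_natCast, map_one, Nat.cast_add, Nat.cast_one]
      ring
  have hdiff := congrArg (derivative^[n + 1]) hy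
  rw [iterate_derivative_mul_iterate_derivative_of_natDegree_le_two (by compute_degree!),
    iterate_derivative_mul_iterate_derivative_of_natDegree_le_two (by compute_degree!)] at hdiff
  simp only [show n + 1 + 1 = n + 2 by omega, show n + 1 + 1 - 1 = n + 1 by omega,
    show n + 1 + 1 - 2 = n by omega, add_zero, Nat.add_sub_cancel] at hdiff
  have d2 : derivative^[2] (X ^ 2 - 1 : R[X]) = 2 := by
    rw [Function.iterate_succ_apply', Function.iterate_one, derivative_X_sq_sub_one, derivative_mul,
      derivative_X, derivative_ofNat]
    ring
  have e1 : derivative (2 * (n : R[X]) * X) = 2 * n := by simp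
  have e2 : derivative^[2] (2 * (n : R[X]) * X) = 0 := by simp
  rw [derivative_X_sq_sub_one, d2, e1, e2] at hdiff
  simp only [zero_mul, smul_zero, add_zero, nsmul_eq_mul] at hdiff
  have hc := Nat.cast_choose_two_mul_two (R := R[X]) (n + 1)
  push_cast at hdiff hc
  simp only [map_mul, map_add, map_natCast, map_one]
  linear_combination hdiff - derivative^[n] y * hc

theorem eval_one_iterate_derivative_X_sq_sub_one_pow [CommRing R] (n : ℕ) :
    (derivative^[n] ((X ^ 2 - 1 : R[X]) ^ n)).eval 1 = n ! * 2 ^ n := by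
  have hfact : (X ^ 2 - 1 : R[X]) ^ n = (X - C 1) ^ n * (X + 1) ^ n := by
    rw [← mul_pow, C_1]
    ring
  -- at `1` only the term in which all `n` derivatives fall on `(X - 1) ^ n` survives
  rw [hfact, iterate_derivative_mul, eval_finsetSum, Finset.sum_eq_single 0]
  · rw [Nat.sub_zero, iterate_derivative_X_sub_pow_self]
    simp only [Nat.choose_zero_right, one_smul, Function.iterate_zero_apply, eval_mul, eval_natCast,
      eval_pow, eval_add, eval_X, eval_one, one_add_one_eq_two]
  · intro k hk hk0
    rw [iterate_derivative_X_sub_pow, Nat.sub_sub_self (Finset.mem_range_succ_iff.mp hk)]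
    simp [zero_pow hk0]
  · simp

theorem ode_of_comp_X_sq [CommRing R] {Q : R[X]} {c : R}
    (hQ : (X ^ 2 - 1) * derivative^[2] (Q.comp (X ^ 2)) + 2 * X * derivative (Q.comp (X ^ 2))
      = C c * Q.comp (X ^ 2)) :
    (4 * X ^ 2 - 4 * X) * derivative^[2] Q + (6 * X - 2) * derivative Q = C c * Q := by
  have d1 : derivative (Q.comp (X ^ 2)) = 2 * X * (derivative Q).comp (X ^ 2) := by
    rw [derivative_comp, derivative_X_sq, C_ofNat]
  have d2 : derivative^[2] (Q.comp (X ^ 2))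
      = 4 * X ^ 2 * (derivative (derivative Q)).comp (X ^ 2) + 2 * (derivative Q).comp (X ^ 2) := by
    rw [Function.iterate_succ_apply', Function.iterate_one, d1, derivative_mul, derivative_mul,
      derivative_comp, derivative_X_sq, C_ofNat, derivative_ofNat, derivative_X]
    ring
  apply expand_injective two_pos
  simp only [expand_eq_comp_X_pow, Function.iterate_succ_apply',
    Function.iterate_zero_apply, add_comp, mul_comp, sub_comp, ofNat_comp, X_comp, pow_comp, C_comp]
  rw [d1, d2] at hQ
  linear_combination hQ

theorem eval_one_iterate_derivative_succ_of_ode [CommRing R] {Q : R[X]} {c : R}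
    (hQ : (4 * X ^ 2 - 4 * X) * derivative^[2] Q + (6 * X - 2) * derivative Q = C c * Q) (h : ℕ) :
    4 * (h + 1) * (derivative^[h + 1] Q).eval 1
      = (c - 4 * h ^ 2 - 2 * h) * (derivative^[h] Q).eval 1 := by
  have hQ' : (4 * X ^ 2 - 4 * X) * derivative^[2] Q + (6 * X - 2) * derivative^[1] Q
      = C c * derivative^[0] Q := hQ
  have hdiff := congrArg (fun p ↦ (derivative^[h] p).eval 1) hQ'
  simp only [iterate_map_add] at hdiff
  rw [iterate_derivative_mul_iterate_derivative_of_natDegree_le_two (by compute_degree!),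
    iterate_derivative_mul_iterate_derivative_of_natDegree_le_two (by compute_degree!),
    iterate_derivative_mul_iterate_derivative_of_natDegree_le_two (by compute_degree!)] at hdiff
  have a1 : derivative (4 * X ^ 2 - 4 * X : R[X]) = 8 * X - 4 := by
    rw [derivative_sub, derivative_mul, derivative_mul, derivative_X_sq, C_ofNat, derivative_X,
      derivative_ofNat]
    ring
  have a2 : derivative^[2] (4 * X ^ 2 - 4 * X : R[X]) = 8 := by
    rw [Function.iterate_succ_apply', Function.iterate_one, a1, derivative_sub, derivative_mul,
      derivative_X, derivative_ofNat, derivative_ofNat]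
    ring
  have b1 : derivative (6 * X - 2 : R[X]) = 6 := by simp
  have b2 : derivative^[2] (6 * X - 2 : R[X]) = 0 := by simp
  have c2 : derivative^[2] (C c) = 0 := by simp
  simp only [a1, a2, b1, b2, c2, derivative_C, zero_mul, smul_zero, add_zero, Nat.add_sub_cancel,
    show h + 2 - 1 = h + 1 by omega] at hdiff
  simp only [nsmul_eq_mul, eval_add, eval_sub, eval_mul, eval_pow, eval_X, eval_ofNat, eval_natCast,
    eval_C] at hdiff
  linear_combination hdiff - (derivative^[h] Q).eval 1 * 4 * Nat.cast_choose_two_mul_two (R := R) h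

end Polynomial

theorem legendre_eval_one (n : ℕ) : (legendre n).eval 1 = 1 := by
  rw [legendre, eval_mul, eval_C, eval_one_iterate_derivative_X_sq_sub_one_pow]
  field_simp

theorem legendre_ode (n : ℕ) :
    (X ^ 2 - 1) * derivative^[2] (legendre n) + 2 * X * derivative (legendre n)
      = C ((n : ℝ) * (n + 1)) * legendre n := by
  simp only [legendre, iterate_derivative_C_mul, derivative_C_mul, ← Function.iterate_succ_apply',
    ← Function.iterate_add_apply]
  rw [add_comm 2 n]
  linear_combination C (1 / ((2:ℝ) ^ n * n.factorial)) * rodrigues_ode (R := ℝ) n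

noncomputable def evenLegendreDerivAtOne (m h : ℕ) : ℝ :=
  (1 / 2 ^ h) * (((2 * m + 2 * h - 1)‼ : ℝ) / ((2 * m - 1)‼ : ℝ)) *
    (((2 * m)‼ : ℝ) / (((2 * h)‼ : ℝ) * ((2 * m - 2 * h)‼ : ℝ)))

theorem evenLegendreDerivAtOne_zero (m : ℕ) : evenLegendreDerivAtOne m 0 = 1 := by
  simp only [evenLegendreDerivAtOne, mul_zero, add_zero, tsub_zero, pow_zero,
    Nat.doubleFactorial, Nat.cast_one]
  field_simp

theorem evenLegendreDerivAtOne_succ {m h : ℕ} (hh : h < m) :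
    2 * (h + 1) * evenLegendreDerivAtOne m (h + 1)
      = (m - h) * (2 * m + 2 * h + 1) * evenLegendreDerivAtOne m h := by
  obtain ⟨k, rfl⟩ := Nat.exists_eq_add_of_lt hh
  unfold evenLegendreDerivAtOne
  rw [show 2 * (h + k + 1) + 2 * (h + 1) - 1 = (4 * h + 2 * k + 1) + 2 by omega,
    show 2 * (h + k + 1) + 2 * h - 1 = 4 * h + 2 * k + 1 by omega,
    show 2 * (h + k + 1) - 2 * (h + 1) = 2 * k by omega,
    show 2 * (h + k + 1) - 2 * h = 2 * k + 2 by omega,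
    show 2 * (h + 1) = 2 * h + 2 by omega, Nat.doubleFactorial_add_two,
    Nat.doubleFactorial_add_two, Nat.doubleFactorial_add_two]
  push_cast
  field_simp
  ring

/-- if `Q_m` is the (unique) polynomial with `Q_m(t²) = P_{2m}(t)`, then for
`h ≤ m` its `h`-th derivative at `1` is
`2^{−h}·((2m+2h−1)‼/(2m−1)‼)·((2m)‼/((2h)‼(2m−2h)‼))`. -/
theorem stmt_9 (m : ℕ) (Q : Polynomial ℝ)
    (hQ : ∀ t : ℝ, Q.eval (t ^ 2) = (legendre (2 * m)).eval t)
    (h : ℕ) (hh : h ≤ m) :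
    (Polynomial.derivative^[h] Q).eval 1
      = (1 / 2 ^ h) * (((2 * m + 2 * h - 1)‼ : ℝ) / ((2 * m - 1)‼ : ℝ)) *
          (((2 * m)‼ : ℝ) / (((2 * h)‼ : ℝ) * ((2 * m - 2 * h)‼ : ℝ))) := by
  have hcomp : Q.comp (X ^ 2) = legendre (2 * m) := Polynomial.funext fun t ↦ by simpa using hQ t
  have hode := ode_of_comp_X_sq (hcomp ▸ legendre_ode (2 * m))
  change _ = evenLegendreDerivAtOne m h
  induction h with
  | zero => simpa [evenLegendreDerivAtOne_zero, ← hcomp] using legendre_eval_one (2 * m)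
  | succ h ih =>
    have hrec := eval_one_iterate_derivative_succ_of_ode hode h
    rw [ih (by omega)] at hrec
    refine mul_left_cancel₀ (by positivity : (4 * ((h : ℝ) + 1)) ≠ 0) ?_
    push_cast at hrec ⊢
    linear_combination hrec - 2 * evenLegendreDerivAtOne_succ (by omega : h < m)
end

section
/- Define rational numbers c̄_j^{(h)} for h ≥ 0, 0 ≤ j ≤ h by the recursion c̄_0^{(0)} = 1 and c̄_j^{(h+1)} = −(2j−1)·c̄_{j−1}^{(h)} + (2h−j)·c̄_j^{(h)} (with the conventions c̄_{−1}^{(h)} = 0 and c̄_{h+1}^{(h)} = 0). Then for every h ∈ ℕ and every μ ∈ ℝ: Σ_{j=0}^{h} c̄_j^{(h)} · [ (μ−j+1)(μ−j+2)⋯(μ+j) / (2j)! ] = ( (−1)^h / (2h)!! ) · [ (μ−2h+2)(μ−2h+4)⋯μ ] · [ (μ+1)(μ+3)⋯(μ+2h−1) ], where the first bracket on the left is the product of the 2j consecutive values μ−j+1, …, μ+j (equal to 1 when j = 0), and each bracket on the right is a product of h factors (equal to 1 when h = 0). -/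
open scoped Nat

/-- The coefficients `c̄_j^{(h)}`: `c̄_0^{(0)} = 1`,
`c̄_j^{(h+1)} = −(2j−1)·c̄_{j−1}^{(h)} + (2h−j)·c̄_j^{(h)}`,
with the conventions `c̄_{−1}^{(h)} = 0` and `c̄_j^{(h)} = 0` for `j > h`. -/
def cbar : ℕ → ℕ → ℚ
  | 0, j => if j = 0 then 1 else 0
  | h + 1, j =>
      (-(2 * (j : ℚ) - 1)) * (if j = 0 then 0 else cbar h (j - 1)) +
        (2 * (h : ℚ) - (j : ℚ)) * cbar h j

lemma cbar_succ_zero (h : ℕ) : cbar (h + 1) 0 = 0 := by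
  induction h with
  | zero => simp [cbar]
  | succ n ih =>
    show (-(2 * ((0:ℕ) : ℚ) - 1)) * (if (0:ℕ) = 0 then 0 else cbar (n+1) (0 - 1)) +
        (2 * (((n+1):ℕ) : ℚ) - ((0:ℕ) : ℚ)) * cbar (n+1) 0 = 0
    simp [ih]

lemma cbar_succ_succ (h j : ℕ) :
    cbar (h + 1) (j + 1) =
      (-(2 * ((j : ℚ) + 1) - 1)) * cbar h j + (2 * (h : ℚ) - ((j : ℚ) + 1)) * cbar h (j + 1) := by
  show (-(2 * ((j+1 : ℕ) : ℚ) - 1)) * (if j + 1 = 0 then 0 else cbar h (j + 1 - 1)) +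
        (2 * (h : ℚ) - ((j+1 : ℕ) : ℚ)) * cbar h (j + 1) = _
  rw [if_neg (Nat.succ_ne_zero j)]
  push_cast [Nat.add_sub_cancel]
  ring

lemma cbar_gt (h : ℕ) : ∀ j, h < j → cbar h j = 0 := by
  induction h with
  | zero => intro j hj; simp [cbar]; omega
  | succ n ih =>
    intro j hj
    match j, hj with
    | j + 1, hj =>
      rw [cbar_succ_succ, ih j (by omega), ih (j+1) (by omega)]
      ring

lemma ratio (h : ℕ) : ∀ j : ℕ, (j : ℚ) * (2 * (h : ℚ) - ((j : ℚ) + 1)) * cbar h (j + 1)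
    = 2 * (2 * (j : ℚ) + 1) * ((j : ℚ) - (h : ℚ)) * cbar h j := by
  induction h with
  | zero =>
    intro j
    match j with
    | 0 => norm_num [cbar]
    | j + 1 => rw [cbar_gt 0 (j+1+1) (by omega), cbar_gt 0 (j+1) (by omega)]; ring
  | succ n ih =>
    intro j
    match j with
    | 0 => simp [cbar_succ_zero, cbar_succ_succ]
    | k + 1 =>
      have H1 := ih k
      have H2 := ih (k + 1)
      rw [cbar_succ_succ, cbar_succ_succ]
      push_cast at H1 H2 ⊢
      linear_combination (2 * (n : ℚ) - k) * H2 - (2 * (k : ℚ) + 3) * H1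

lemma ratioR (h j : ℕ) (μ : ℝ) : (j : ℝ) * (2 * (h : ℝ) - ((j : ℝ) + 1)) * (cbar h (j + 1) : ℝ)
    = 2 * (2 * (j : ℝ) + 1) * ((j : ℝ) - (h : ℝ)) * (cbar h j : ℝ) := by
  have := congrArg (fun q : ℚ => (q : ℝ)) (ratio h j)
  push_cast at this
  exact_mod_cast this

lemma hc0 (h : ℕ) : (h : ℝ) * (cbar h 0 : ℝ) = 0 := by
  match h with
  | 0 => simp
  | h + 1 => rw [cbar_succ_zero]; simp

noncomputable def F (j : ℕ) (μ : ℝ) : ℝ :=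
  (∏ i ∈ Finset.range (2 * j), (μ - (j : ℝ) + 1 + (i : ℝ))) / ((2 * j)! : ℝ)

lemma Fstep (j : ℕ) (μ : ℝ) :
    (2 * (j : ℝ) + 1) * (2 * (j : ℝ) + 2) * F (j + 1) μ = (μ - j) * (μ + j + 1) * F j μ := by
  have hprod : ∏ i ∈ Finset.range (2 * (j + 1)), (μ - ((j + 1 : ℕ) : ℝ) + 1 + (i : ℝ))
      = (μ - j) * (μ + j + 1) * ∏ i ∈ Finset.range (2 * j), (μ - (j : ℝ) + 1 + (i : ℝ)) := by
    have h2 : 2 * (j + 1) = (2 * j + 1) + 1 := by ring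
    rw [h2, Finset.prod_range_succ, Finset.prod_range_succ']
    have e1 : ∀ i ∈ Finset.range (2 * j),
        (μ - ((j + 1 : ℕ) : ℝ) + 1 + ((i + 1 : ℕ) : ℝ)) = μ - (j : ℝ) + 1 + (i : ℝ) := by
      intro i _; push_cast; ring
    rw [Finset.prod_congr rfl e1]
    push_cast
    ring
  have hfact : ((2 * (j + 1))! : ℝ) = (2 * (j : ℝ) + 2) * (2 * (j : ℝ) + 1) * ((2 * j)! : ℝ) := by
    have h2 : 2 * (j + 1) = (2 * j + 1) + 1 := by ring
    rw [h2, Nat.factorial_succ, Nat.factorial_succ]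
    push_cast
    ring
  have hne : ((2 * j)! : ℝ) ≠ 0 := Nat.cast_ne_zero.mpr (Nat.factorial_ne_zero _)
  unfold F
  rw [hprod, hfact]
  field_simp

lemma keyD (h j : ℕ) (μ : ℝ) :
    2 * ((h : ℝ) + 1) * (-(2 * (j : ℝ) + 1) * F (j + 1) μ + (2 * (h : ℝ) - (j : ℝ)) * F j μ)
      = (2 * (h : ℝ) * (2 * (h : ℝ) + 1) - μ * (μ + 1)) * F j μ
        + (2 * (2 * (j : ℝ) + 1) * ((j : ℝ) - (h : ℝ)) * F (j + 1) μ
           + ((j : ℝ) - 1) * ((j : ℝ) - 2 * (h : ℝ)) * F j μ) := by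
  linear_combination (-1 : ℝ) * Fstep j μ

noncomputable def R (h : ℕ) (μ : ℝ) : ℝ :=
  ((-1 : ℝ) ^ h / ((2 * h)‼ : ℝ)) *
    (∏ i ∈ Finset.range h, (μ - 2 * (h : ℝ) + 2 + 2 * (i : ℝ))) *
    (∏ i ∈ Finset.range h, (μ + 1 + 2 * (i : ℝ)))

lemma Rstep (h : ℕ) (μ : ℝ) :
    R (h + 1) μ = (-(μ - 2 * (h : ℝ)) * (μ + 2 * (h : ℝ) + 1) / (2 * ((h : ℝ) + 1))) * R h μ := by
  have hdf : ((2 * (h + 1))‼ : ℝ) = (2 * (h : ℝ) + 2) * ((2 * h)‼ : ℝ) := by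
    have h2 : 2 * (h + 1) = 2 * h + 2 := by ring
    rw [h2, Nat.doubleFactorial_add_two]
    push_cast
    ring
  have hp1 : (∏ i ∈ Finset.range (h + 1), (μ - 2 * ((h + 1 : ℕ) : ℝ) + 2 + 2 * (i : ℝ)))
      = (μ - 2 * (h : ℝ)) * ∏ i ∈ Finset.range h, (μ - 2 * (h : ℝ) + 2 + 2 * (i : ℝ)) := by
    rw [Finset.prod_range_succ']
    have e : ∀ i ∈ Finset.range h,
        (μ - 2 * ((h + 1 : ℕ) : ℝ) + 2 + 2 * ((i + 1 : ℕ) : ℝ)) = μ - 2 * (h : ℝ) + 2 + 2 * (i : ℝ) := by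
      intro i _; push_cast; ring
    rw [Finset.prod_congr rfl e]
    push_cast
    ring
  have hp2 : (∏ i ∈ Finset.range (h + 1), (μ + 1 + 2 * (i : ℝ)))
      = (∏ i ∈ Finset.range h, (μ + 1 + 2 * (i : ℝ))) * (μ + 2 * (h : ℝ) + 1) := by
    rw [Finset.prod_range_succ]
    ring
  have hne : ((2 * h)‼ : ℝ) ≠ 0 :=
    Nat.cast_ne_zero.mpr (Nat.doubleFactorial_pos _).ne'
  have hne2 : ((h : ℝ) + 1) ≠ 0 := by positivity
  unfold R
  rw [hdf, hp1, hp2, pow_succ]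
  field_simp

lemma main_id (h : ℕ) (μ : ℝ) :
    ∑ j ∈ Finset.range (h + 1), (cbar h j : ℝ) * F j μ = R h μ := by
  induction h with
  | zero => norm_num [cbar, F, R]
  | succ h IH =>
    -- Step 1: expand the recursion of cbar
    have e0 : ∀ j ∈ Finset.range (h + 2), (cbar (h + 1) j : ℝ) * F j μ =
        (-(2 * (j : ℝ) - 1)) * (if j = 0 then (0 : ℝ) else (cbar h (j - 1) : ℝ)) * F j μ
        + (2 * (h : ℝ) - (j : ℝ)) * (cbar h j : ℝ) * F j μ := by
      intro j _
      simp only [cbar]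
      push_cast [apply_ite (fun q : ℚ => (q : ℝ))]
      ring
    have eA : ∑ j ∈ Finset.range (h + 2),
          (-(2 * (j : ℝ) - 1)) * (if j = 0 then (0 : ℝ) else (cbar h (j - 1) : ℝ)) * F j μ
        = ∑ j ∈ Finset.range (h + 1), (cbar h j : ℝ) * (-(2 * (j : ℝ) + 1) * F (j + 1) μ) := by
      rw [Finset.sum_range_succ']
      have e1 : ∀ i ∈ Finset.range (h + 1),
          (-(2 * ((i + 1 : ℕ) : ℝ) - 1)) * (if i + 1 = 0 then (0 : ℝ) else (cbar h (i + 1 - 1) : ℝ))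
            * F (i + 1) μ
          = (cbar h i : ℝ) * (-(2 * (i : ℝ) + 1) * F (i + 1) μ) := by
        intro i _
        rw [if_neg (Nat.succ_ne_zero i)]
        push_cast [Nat.add_sub_cancel]
        ring
      rw [Finset.sum_congr rfl e1]
      simp
    have eB : ∑ j ∈ Finset.range (h + 2), (2 * (h : ℝ) - (j : ℝ)) * (cbar h j : ℝ) * F j μ
        = ∑ j ∈ Finset.range (h + 1), (cbar h j : ℝ) * ((2 * (h : ℝ) - (j : ℝ)) * F j μ) := by
      rw [Finset.sum_range_succ, cbar_gt h (h + 1) (by omega)]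
      rw [Finset.sum_congr rfl (fun j _ => by ring :
        ∀ j ∈ Finset.range (h + 1), (2 * (h : ℝ) - (j : ℝ)) * (cbar h j : ℝ) * F j μ
          = (cbar h j : ℝ) * ((2 * (h : ℝ) - (j : ℝ)) * F j μ))]
      simp
    have estep : ∑ j ∈ Finset.range (h + 2), (cbar (h + 1) j : ℝ) * F j μ
        = ∑ j ∈ Finset.range (h + 1), (cbar h j : ℝ) *
            (-(2 * (j : ℝ) + 1) * F (j + 1) μ + (2 * (h : ℝ) - (j : ℝ)) * F j μ) := by
      rw [Finset.sum_congr rfl e0, Finset.sum_add_distrib, eA, eB, ← Finset.sum_add_distrib]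
      exact Finset.sum_congr rfl fun j _ => by ring
    -- Step 2: the telescoping identity T1 + T2 = 0
    have hT : (∑ j ∈ Finset.range (h + 1),
          (cbar h j : ℝ) * (2 * (2 * (j : ℝ) + 1) * ((j : ℝ) - (h : ℝ)) * F (j + 1) μ))
        + (∑ j ∈ Finset.range (h + 1),
          (cbar h j : ℝ) * (((j : ℝ) - 1) * ((j : ℝ) - 2 * (h : ℝ)) * F j μ)) = 0 := by
      have h1 : (∑ j ∈ Finset.range (h + 1),
            (cbar h j : ℝ) * (2 * (2 * (j : ℝ) + 1) * ((j : ℝ) - (h : ℝ)) * F (j + 1) μ))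
          = ∑ j ∈ Finset.range h,
            ((j : ℝ) * (2 * (h : ℝ) - ((j : ℝ) + 1)) * (cbar h (j + 1) : ℝ)) * F (j + 1) μ := by
        rw [Finset.sum_range_succ]
        rw [Finset.sum_congr rfl (fun j _ => by linear_combination (-(F (j + 1) μ)) * ratioR h j μ :
          ∀ j ∈ Finset.range h,
            (cbar h j : ℝ) * (2 * (2 * (j : ℝ) + 1) * ((j : ℝ) - (h : ℝ)) * F (j + 1) μ)
            = ((j : ℝ) * (2 * (h : ℝ) - ((j : ℝ) + 1)) * (cbar h (j + 1) : ℝ)) * F (j + 1) μ)]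
        simp
      have h2 : (∑ j ∈ Finset.range (h + 1),
            (cbar h j : ℝ) * (((j : ℝ) - 1) * ((j : ℝ) - 2 * (h : ℝ)) * F j μ))
          = ∑ i ∈ Finset.range h,
            (cbar h (i + 1) : ℝ) * ((((i + 1 : ℕ) : ℝ) - 1) * (((i + 1 : ℕ) : ℝ) - 2 * (h : ℝ))
              * F (i + 1) μ) := by
        rw [Finset.sum_range_succ']
        have hz : (cbar h 0 : ℝ) * ((((0 : ℕ) : ℝ) - 1) * (((0 : ℕ) : ℝ) - 2 * (h : ℝ)) * F 0 μ)
            = 0 := by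
          push_cast
          linear_combination (2 * F 0 μ) * hc0 h
        rw [hz, add_zero]
      rw [h1, h2, ← Finset.sum_add_distrib]
      apply Finset.sum_eq_zero
      intro j _
      push_cast
      ring
    -- Step 3: combine
    have hne2 : (2 * ((h : ℝ) + 1)) ≠ 0 := by positivity
    have hmul : 2 * ((h : ℝ) + 1) * (∑ j ∈ Finset.range (h + 2), (cbar (h + 1) j : ℝ) * F j μ)
        = (-(μ - 2 * (h : ℝ)) * (μ + 2 * (h : ℝ) + 1)) *
            ∑ j ∈ Finset.range (h + 1), (cbar h j : ℝ) * F j μ := by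
      rw [estep, Finset.mul_sum]
      rw [Finset.sum_congr rfl (fun j _ => by rw [← mul_assoc, mul_comm (2 * ((h:ℝ)+1)) ((cbar h j : ℝ)), mul_assoc, keyD h j μ] :
        ∀ j ∈ Finset.range (h + 1),
          2 * ((h : ℝ) + 1) * ((cbar h j : ℝ) *
            (-(2 * (j : ℝ) + 1) * F (j + 1) μ + (2 * (h : ℝ) - (j : ℝ)) * F j μ))
          = (cbar h j : ℝ) * ((2 * (h : ℝ) * (2 * (h : ℝ) + 1) - μ * (μ + 1)) * F j μ
              + (2 * (2 * (j : ℝ) + 1) * ((j : ℝ) - (h : ℝ)) * F (j + 1) μ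
                 + ((j : ℝ) - 1) * ((j : ℝ) - 2 * (h : ℝ)) * F j μ)))]
      rw [Finset.sum_congr rfl (fun j _ => by ring :
        ∀ j ∈ Finset.range (h + 1),
          (cbar h j : ℝ) * ((2 * (h : ℝ) * (2 * (h : ℝ) + 1) - μ * (μ + 1)) * F j μ
              + (2 * (2 * (j : ℝ) + 1) * ((j : ℝ) - (h : ℝ)) * F (j + 1) μ
                 + ((j : ℝ) - 1) * ((j : ℝ) - 2 * (h : ℝ)) * F j μ))
          = (2 * (h : ℝ) * (2 * (h : ℝ) + 1) - μ * (μ + 1)) * ((cbar h j : ℝ) * F j μ)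
              + ((cbar h j : ℝ) * (2 * (2 * (j : ℝ) + 1) * ((j : ℝ) - (h : ℝ)) * F (j + 1) μ)
                 + (cbar h j : ℝ) * (((j : ℝ) - 1) * ((j : ℝ) - 2 * (h : ℝ)) * F j μ)))]
      rw [Finset.sum_add_distrib, Finset.sum_add_distrib, hT, add_zero, ← Finset.mul_sum]
      ring
    have goal2 : ∑ j ∈ Finset.range (h + 2), (cbar (h + 1) j : ℝ) * F j μ
        = (-(μ - 2 * (h : ℝ)) * (μ + 2 * (h : ℝ) + 1) / (2 * ((h : ℝ) + 1))) *
            ∑ j ∈ Finset.range (h + 1), (cbar h j : ℝ) * F j μ := by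
      rw [div_mul_eq_mul_div, eq_div_iff hne2]
      linarith [hmul]
    rw [goal2, IH, ← Rstep]

/-- the polynomial identity
`Σ_{j=0}^{h} c̄_j^{(h)} (μ−j+1)⋯(μ+j)/(2j)!
  = ((−1)^h/(2h)‼)·(μ−2h+2)(μ−2h+4)⋯μ·(μ+1)(μ+3)⋯(μ+2h−1)`. -/
theorem stmt_11 (h : ℕ) (μ : ℝ) :
    ∑ j ∈ Finset.range (h + 1), (cbar h j : ℝ) *
        ((∏ i ∈ Finset.range (2 * j), (μ - (j : ℝ) + 1 + (i : ℝ))) / ((2 * j)! : ℝ))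
      = ((-1 : ℝ) ^ h / ((2 * h)‼ : ℝ)) *
          (∏ i ∈ Finset.range h, (μ - 2 * (h : ℝ) + 2 + 2 * (i : ℝ))) *
          (∏ i ∈ Finset.range h, (μ + 1 + 2 * (i : ℝ))) := by
  exact main_id h μ
end

section
/- Define rational numbers c̄_j^{(h)} by c̄_0^{(0)} = 1 and c̄_j^{(h+1)} = −(2j−1)·c̄_{j−1}^{(h)} + (2h−j)·c̄_j^{(h)}, and rational numbers ĉ_j^{(h)} by ĉ_0^{(0)} = 1 and ĉ_j^{(h+1)} = −( j(2j−1)/(h+1) )·ĉ_{j−1}^{(h)} + ( (4h² − j² + 2h − j)/(2(h+1)) )·ĉ_j^{(h)}, in both cases for h ≥ 0, 0 ≤ j ≤ h+1, with the conventions c̄_{−1}^{(h)} = ĉ_{−1}^{(h)} = 0 and c̄_{h+1}^{(h)} = ĉ_{h+1}^{(h)} = 0. Then ĉ_j^{(h)} = c̄_j^{(h)} for all h ≥ 0 and 0 ≤ j ≤ h. -/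
/-- The coefficients `ĉ_j^{(h)}`: `ĉ_0^{(0)} = 1`,
`ĉ_j^{(h+1)} = −(j(2j−1)/(h+1))·ĉ_{j−1}^{(h)} + ((4h²−j²+2h−j)/(2(h+1)))·ĉ_j^{(h)}`,
with the conventions `ĉ_{−1}^{(h)} = 0` and `ĉ_j^{(h)} = 0` for `j > h`. -/
def chat : ℕ → ℕ → ℚ
  | 0, j => if j = 0 then 1 else 0
  | h + 1, j =>
      (-((j : ℚ) * (2 * (j : ℚ) - 1) / ((h : ℚ) + 1))) *
          (if j = 0 then 0 else chat h (j - 1)) +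
        ((4 * (h : ℚ) ^ 2 - (j : ℚ) ^ 2 + 2 * (h : ℚ) - (j : ℚ)) / (2 * ((h : ℚ) + 1))) *
          chat h j

theorem cbar_succ_left_zero (h : ℕ) :
    cbar (h + 1) 0 = 2 * h * cbar h 0 := by
  simp [cbar]

theorem cbar_succ_left_succ (h j : ℕ) :
    cbar (h + 1) (j + 1) = -(2 * j + 1) * cbar h j + (2 * h - (j + 1)) * cbar h (j + 1) := by
  simp only [cbar, Nat.add_sub_cancel, if_neg (Nat.succ_ne_zero j)]
  push_cast
  ring

theorem mul_cbar_succ_right (h j : ℕ) :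
    (j : ℚ) * (j + 1 - 2 * h) * cbar h (j + 1) = 2 * (2 * j + 1) * (h - j) * cbar h j := by
  induction h generalizing j with
  | zero => cases j <;> simp [cbar]
  | succ h ih =>
    cases j with
    | zero =>
      rw [cbar_succ_left_zero]
      push_cast
      linear_combination (2 * ((h : ℚ) + 1)) * ih 0
    | succ i =>
      have ih₁ := ih (i + 1)
      have ih₀ := ih i
      rw [cbar_succ_left_succ, cbar_succ_left_succ]
      push_cast at ih₁ ⊢
      linear_combination (2 * (h : ℚ) - i) * ih₁ - (2 * (i : ℚ) + 3) * ih₀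

theorem cbar_succ_left_eq_chat_step (h j : ℕ) :
    cbar (h + 1) j =
      (-((j : ℚ) * (2 * (j : ℚ) - 1) / ((h : ℚ) + 1))) *
          (if j = 0 then 0 else cbar h (j - 1)) +
        ((4 * (h : ℚ) ^ 2 - (j : ℚ) ^ 2 + 2 * (h : ℚ) - (j : ℚ)) / (2 * ((h : ℚ) + 1))) *
          cbar h j := by
  have hh : (h : ℚ) + 1 ≠ 0 := by positivity
  cases j with
  | zero =>
    rw [cbar_succ_left_zero, if_pos rfl, Nat.cast_zero]
    field_simp
    linear_combination (-1 : ℚ) * mul_cbar_succ_right h 0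
  | succ i =>
    rw [cbar_succ_left_succ, if_neg (Nat.succ_ne_zero i), Nat.add_sub_cancel]
    field_simp
    push_cast
    linear_combination mul_cbar_succ_right h i

theorem chat_eq_cbar (h j : ℕ) : chat h j = cbar h j := by
  induction h generalizing j with
  | zero => rfl
  | succ h ih => simp only [chat, ih, cbar_succ_left_eq_chat_step]

/-- the two recursions define the same coefficients. -/
theorem stmt_12 : ∀ h j : ℕ, j ≤ h → chat h j = cbar h j :=
  fun h j _ => chat_eq_cbar h j
end

section
/- For every ε ∈ ℝ and every k ∈ ℕ, the k-th derivative at t = 0 of the function t ↦ (ε² − 2tε + 1)^{−1/2} (which is defined and smooth on a neighborhood of t = 0, since ε² + 1 > 0) equals (2k−1)!!·ε^k / (1 + ε²)^{(2k+1)/2}. -/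
open Real
open scoped Nat

lemma dfac_step (k : ℕ) : (2 * (k + 1) - 1)‼ = (2 * k + 1) * (2 * k - 1)‼ := by
  cases k with
  | zero => simp [Nat.doubleFactorial]
  | succ n =>
    have h1 : 2 * (n + 1 + 1) - 1 = (2 * (n + 1) - 1) + 2 := by omega
    have h2 : 2 * (n + 1) - 1 = 2 * n + 1 := by omega
    rw [h1, Nat.doubleFactorial_add_two, h2]
    ring

/-- the `k`-th derivative at `t = 0` of `t ↦ (ε² − 2tε + 1)^{−1/2}`
equals `(2k−1)‼ ε^k / (1+ε²)^{(2k+1)/2}`. -/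
theorem stmt_14 (ε : ℝ) (k : ℕ) :
    iteratedDeriv k (fun t : ℝ => (ε ^ 2 - 2 * t * ε + 1) ^ (-(1:ℝ) / 2)) 0
      = ((2 * k - 1)‼ : ℝ) * ε ^ k / (1 + ε ^ 2) ^ ((2 * (k : ℝ) + 1) / 2) := by
  have key : ∀ k : ℕ, ∀ t : ℝ, 0 < ε ^ 2 - 2 * t * ε + 1 →
      iteratedDeriv k (fun t : ℝ => (ε ^ 2 - 2 * t * ε + 1) ^ (-(1:ℝ) / 2)) t
        = ((2 * k - 1)‼ : ℝ) * ε ^ k *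
            (ε ^ 2 - 2 * t * ε + 1) ^ (-(2 * (k : ℝ) + 1) / 2) := by
    intro k
    induction k with
    | zero =>
      intro t ht
      simp [iteratedDeriv_zero]
    | succ k ih =>
      intro t ht
      rw [iteratedDeriv_succ]
      have hopen : IsOpen {s : ℝ | 0 < ε ^ 2 - 2 * s * ε + 1} := by
        apply isOpen_lt continuous_const
        fun_prop
      have hev : (iteratedDeriv k (fun t : ℝ => (ε ^ 2 - 2 * t * ε + 1) ^ (-(1:ℝ) / 2)))
          =ᶠ[nhds t] (fun s => ((2 * k - 1)‼ : ℝ) * ε ^ k *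
            (ε ^ 2 - 2 * s * ε + 1) ^ (-(2 * (k : ℝ) + 1) / 2)) := by
        filter_upwards [hopen.mem_nhds ht] with s hs using ih s hs
      rw [hev.deriv_eq]
      have hg : HasDerivAt (fun s : ℝ => ε ^ 2 - 2 * s * ε + 1) (-(2 * ε)) t := by
        have h1 : HasDerivAt (fun s : ℝ => 2 * s * ε) (2 * ε) t := by
          simpa using ((hasDerivAt_id t).const_mul 2).mul_const ε
        simpa using ((hasDerivAt_const t (ε ^ 2)).sub h1).add_const 1
      have hd := (hg.rpow_const (p := -(2 * (k : ℝ) + 1) / 2)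
        (Or.inl ht.ne')).const_mul (((2 * k - 1)‼ : ℝ) * ε ^ k)
      rw [hd.deriv]
      have hexp : (-(2 * (k : ℝ) + 1) / 2) - 1 = -(2 * ((k : ℝ) + 1) + 1) / 2 := by ring
      rw [hexp]
      have hfac : ((2 * (k + 1) - 1)‼ : ℝ) = (2 * (k : ℝ) + 1) * ((2 * k - 1)‼ : ℝ) := by
        rw [dfac_step k]
        push_cast
        ring
      rw [hfac]
      push_cast
      ring
  have h0 : (0:ℝ) < ε ^ 2 - 2 * 0 * ε + 1 := by nlinarith [sq_nonneg ε]
  rw [key k 0 h0]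
  have hb : (0:ℝ) < 1 + ε ^ 2 := by positivity
  have : ε ^ 2 - 2 * 0 * ε + 1 = 1 + ε ^ 2 := by ring
  rw [this, neg_div, Real.rpow_neg hb.le]
  ring
end
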